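/- Let H be a hypergraph, S, B ⊆ V(H) and x ∈ S. Let H_1 := H \ H(x) and H_2 := H \ (H(B) ∩ H(x)). Then, as an identity of cardinalities, #btr_B(H, S) + #btr_{B ∪ {x}}(H_2, S \ {x}) = #btr_B(H, S \ {x}) + #btr_B(H_1, S \ {x}); equivalently #btr_B(H, S) = #btr_B(H, S \ {x}) + #btr_B(H_1, S \ {x}) − #btr_{B ∪ {x}}(H_2, S \ {x}). -/

import Mathlib

variable {α : Type*} [DecidableEq α]

/-- The vertex set `V(H)` of a hypergraph `H`: the union of its hyperedges. -/
def verts (H : Finset (Finset α)) : Finset α := H.sup id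

/-- `H(S)`: the set of hyperedges of `H` meeting `S`. -/
def edgesMeeting (H : Finset (Finset α)) (S : Finset α) : Finset (Finset α) :=
  H.filter fun e => (e ∩ S).Nonempty

/-- `T` is a transversal of `H`: `T ⊆ V(H)` and `T` meets every hyperedge. -/
def IsTransversal (H : Finset (Finset α)) (T : Finset α) : Prop :=
  T ⊆ verts H ∧ ∀ e ∈ H, (T ∩ e).Nonempty

/-- `tr H`: the set of transversals of `H`. -/
def tr (H : Finset (Finset α)) : Finset (Finset α) :=
  (verts H).powerset.filter fun T => ∀ e ∈ H, (T ∩ e).Nonempty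

/-- `mtr H`: the set of minimal transversals of `H`. -/
def mtr (H : Finset (Finset α)) : Finset (Finset α) :=
  (tr H).filter fun T => ∀ x ∈ T, T.erase x ∉ tr H

/-- `T` is a `B`-blocked transversal of `H'`: a transversal of `H'` such that every `x ∈ T`
has a private hyperedge in `H' \ H'(B)`. -/
def IsBlockedTr (B : Finset α) (H' : Finset (Finset α)) (T : Finset α) : Prop :=
  IsTransversal H' T ∧ ∀ x ∈ T, ∃ e ∈ H' \ edgesMeeting H' B, e ∩ T = {x}

/-- `btr_B(H')`: the set of `B`-blocked transversals of `H'`. -/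
def btr (B : Finset α) (H' : Finset (Finset α)) : Finset (Finset α) :=
  (tr H').filter fun T => ∀ x ∈ T, ∃ e ∈ H' \ edgesMeeting H' B, e ∩ T = {x}

/-- `btr_B(H', S)`: the `B`-blocked transversals of `H'` included in `S`. -/
def btrS (B : Finset α) (H' : Finset (Finset α)) (S : Finset α) : Finset (Finset α) :=
  (btr B H').filter fun T => T ⊆ S


/-! Split the `B`-blocked transversals `T ⊆ S` of `H` according to whether `x ∈ T`. Those
avoiding `x` are counted by `#btr_B(H, S \ {x})`. Those containing `x` correspond, via
`T ↦ T \ {x}`, to the `T' ∈ btr_B(H₁, S \ {x})` for which `x` has a private hyperedge in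
`H \ H(B)` with respect to `T' ∪ {x}`, i.e. some hyperedge through `x` avoiding `B` misses `T'`.
The remaining `T' ∈ btr_B(H₁, S \ {x})`, which meet every such hyperedge, are exactly
`btr_{B ∪ {x}}(H₂, S \ {x})`. -/

def HasPrivateEdge (B : Finset α) (H : Finset (Finset α)) (T : Finset α) (y : α) : Prop :=
  ∃ e ∈ H \ edgesMeeting H B, e ∩ T = {y}

instance (B : Finset α) (H : Finset (Finset α)) (T : Finset α) (y : α) :
    Decidable (HasPrivateEdge B H T y) := by
  unfold HasPrivateEdge; infer_instance

open Finset

section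

variable {H : Finset (Finset α)} {B S T e : Finset α} {x y : α}

lemma subset_verts_of_mem (he : e ∈ H) : e ⊆ verts H :=
  le_sup (f := id) he

lemma mem_sdiff_edgesMeeting : e ∈ H \ edgesMeeting H S ↔ e ∈ H ∧ Disjoint e S := by
  simp only [edgesMeeting, mem_sdiff, mem_filter, ← not_disjoint_iff_nonempty_inter]
  tauto

lemma mem_sdiff_edgesMeeting_singleton : e ∈ H \ edgesMeeting H {x} ↔ e ∈ H ∧ x ∉ e := by
  rw [mem_sdiff_edgesMeeting, disjoint_singleton_right]

lemma mem_sdiff_edgesMeeting_inter :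
    e ∈ H \ (edgesMeeting H B ∩ edgesMeeting H {x}) ↔
      e ∈ H ∧ (x ∈ e → Disjoint e B) := by
  rw [sdiff_inter_distrib_right, mem_union, mem_sdiff_edgesMeeting,
    mem_sdiff_edgesMeeting_singleton]
  tauto

lemma HasPrivateEdge.mem_verts (h : HasPrivateEdge B H T y) : y ∈ verts H := by
  obtain ⟨e, he, heT⟩ := h
  exact subset_verts_of_mem (mem_sdiff.1 he).1 (mem_of_mem_inter_left (s₂ := T)
    (heT ▸ mem_singleton_self y))

lemma mem_btrS :
    T ∈ btrS B H S ↔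
      (∀ e ∈ H, (T ∩ e).Nonempty) ∧ (∀ y ∈ T, HasPrivateEdge B H T y) ∧ T ⊆ S := by
  simp only [btrS, btr, tr, mem_filter, mem_powerset]
  exact ⟨fun ⟨⟨⟨_, hcov⟩, hpriv⟩, hTS⟩ => ⟨hcov, hpriv, hTS⟩,
    fun ⟨hcov, hpriv, hTS⟩ =>
      ⟨⟨⟨fun y hy => (hpriv y hy).mem_verts, hcov⟩, hpriv⟩, hTS⟩⟩

lemma filter_notMem_btrS : (btrS B H S).filter (x ∉ ·) = btrS B H (S \ {x}) := by
  ext T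
  simp only [btrS, mem_filter, subset_sdiff, disjoint_singleton_right]
  tauto

lemma hasPrivateEdge_insert_of_ne (hyx : y ≠ x) :
    HasPrivateEdge B H (insert x T) y ↔ HasPrivateEdge B (H \ edgesMeeting H {x}) T y := by
  unfold HasPrivateEdge
  simp only [mem_sdiff_edgesMeeting, disjoint_singleton_right]
  constructor
  · rintro ⟨e, ⟨heH, heB⟩, he⟩
    have hxe : x ∉ e := fun hxe =>
      hyx (mem_singleton.1 (he ▸ mem_inter.2 ⟨hxe, mem_insert_self x T⟩)).symm
    exact ⟨e, ⟨⟨heH, hxe⟩, heB⟩, inter_insert_of_notMem hxe ▸ he⟩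
  · rintro ⟨e, ⟨⟨heH, hxe⟩, heB⟩, he⟩
    exact ⟨e, ⟨heH, heB⟩, (inter_insert_of_notMem hxe).trans he⟩

lemma hasPrivateEdge_insert_self (hxT : x ∉ T) :
    HasPrivateEdge B H (insert x T) x ↔
      ∃ e ∈ H \ edgesMeeting H B, x ∈ e ∧ Disjoint e T := by
  refine exists_congr fun e => and_congr_right fun _ => ?_
  simp only [Finset.ext_iff, mem_inter, mem_insert, mem_singleton,
    disjoint_left]
  grind

lemma forall_insert_inter_nonempty_iff :
    (∀ e ∈ H, (insert x T ∩ e).Nonempty) ↔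
      ∀ e ∈ H \ edgesMeeting H {x}, (T ∩ e).Nonempty := by
  simp only [mem_sdiff_edgesMeeting_singleton, and_imp]
  refine forall₂_congr fun e heH => ?_
  by_cases hxe : x ∈ e <;> simp [hxe, insert_inter_of_mem, insert_inter_of_notMem]

lemma insert_mem_btrS_iff (hx : x ∈ S) (hxT : x ∉ T) :
    insert x T ∈ btrS B H S ↔
      T ∈ btrS B (H \ edgesMeeting H {x}) (S \ {x}) ∧ HasPrivateEdge B H (insert x T) x := by
  have hpriv : (∀ y ∈ T, HasPrivateEdge B H (insert x T) y) ↔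
      ∀ y ∈ T, HasPrivateEdge B (H \ edgesMeeting H {x}) T y :=
    forall₂_congr fun y hy => hasPrivateEdge_insert_of_ne (ne_of_mem_of_not_mem hy hxT)
  have hsub : T ⊆ S \ {x} ↔ T ⊆ S := by
    simp [subset_sdiff, disjoint_singleton_right, hxT]
  rw [mem_btrS, mem_btrS, forall_mem_insert, insert_subset_iff,
    forall_insert_inter_nonempty_iff, hpriv, hsub]
  tauto

lemma card_filter_mem_btrS (hx : x ∈ S) :
    #((btrS B H S).filter (x ∈ ·)) =
      #((btrS B (H \ edgesMeeting H {x}) (S \ {x})).filter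
        fun T => HasPrivateEdge B H (insert x T) x) := by
  have x_notMem {T} (hT : T ∈ btrS B (H \ edgesMeeting H {x}) (S \ {x})) : x ∉ T := fun hxT =>
    (mem_sdiff.1 ((mem_btrS.1 hT).2.2 hxT)).2 (mem_singleton_self x)
  refine card_nbij' (·.erase x) (insert x ·) ?_ ?_ ?_ ?_
  · intro T hT
    simp only [mem_coe, mem_filter] at hT ⊢
    rw [← insert_mem_btrS_iff hx (notMem_erase x T), insert_erase hT.2]
    exact hT.1
  · intro T hT
    simp only [mem_coe, mem_filter] at hT ⊢
    exact ⟨(insert_mem_btrS_iff hx (x_notMem hT.1)).2 hT, mem_insert_self x T⟩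
  · intro T hT
    exact insert_erase (mem_filter.1 hT).2
  · intro T hT
    exact erase_insert (x_notMem (mem_filter.1 hT).1)

lemma hasPrivateEdge_union_singleton :
    HasPrivateEdge (B ∪ {x}) (H \ (edgesMeeting H B ∩ edgesMeeting H {x})) T y ↔
      HasPrivateEdge B (H \ edgesMeeting H {x}) T y := by
  unfold HasPrivateEdge
  simp only [mem_sdiff_edgesMeeting, mem_sdiff_edgesMeeting_inter,
    disjoint_union_right, disjoint_singleton_right]
  grind

lemma forall_inter_nonempty_sdiff_inter_iff (hxT : x ∉ T) :
    (∀ e ∈ H \ (edgesMeeting H B ∩ edgesMeeting H {x}), (T ∩ e).Nonempty) ↔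
      (∀ e ∈ H \ edgesMeeting H {x}, (T ∩ e).Nonempty) ∧
        ¬ HasPrivateEdge B H (insert x T) x := by
  rw [hasPrivateEdge_insert_self hxT]
  constructor
  · rintro hcov
    refine ⟨fun e he => hcov e ?_, ?_⟩
    · obtain ⟨heH, hxe⟩ := mem_sdiff_edgesMeeting_singleton.1 he
      exact mem_sdiff_edgesMeeting_inter.2 ⟨heH, fun h => absurd h hxe⟩
    · rintro ⟨e, he, hxe, heT⟩
      obtain ⟨heH, heB⟩ := mem_sdiff_edgesMeeting.1 he
      exact not_disjoint_iff_nonempty_inter.2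
        (hcov e (mem_sdiff_edgesMeeting_inter.2 ⟨heH, fun _ => heB⟩)) heT.symm
  · rintro ⟨hcov, hfree⟩ e he
    obtain ⟨heH, heB⟩ := mem_sdiff_edgesMeeting_inter.1 he
    by_cases hxe : x ∈ e
    · rw [← not_disjoint_iff_nonempty_inter, disjoint_comm]
      exact fun heT => hfree ⟨e, mem_sdiff_edgesMeeting.2 ⟨heH, heB hxe⟩, hxe, heT⟩
    · exact hcov e (mem_sdiff_edgesMeeting_singleton.2 ⟨heH, hxe⟩)

lemma btrS_union_singleton_eq_filter :
    btrS (B ∪ {x}) (H \ (edgesMeeting H B ∩ edgesMeeting H {x})) (S \ {x}) =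
      (btrS B (H \ edgesMeeting H {x}) (S \ {x})).filter
        fun T => ¬ HasPrivateEdge B H (insert x T) x := by
  ext T
  rw [mem_filter, mem_btrS, mem_btrS]
  by_cases hxT : x ∈ T
  · have : ¬ T ⊆ S \ {x} := fun h => (mem_sdiff.1 (h hxT)).2 (mem_singleton_self x)
    tauto
  · simp only [forall_inter_nonempty_sdiff_inter_iff hxT, hasPrivateEdge_union_singleton]
    tauto

end

theorem card_btrS_rec_general (H : Finset (Finset α)) (S B : Finset α)
    (x : α) (hx : x ∈ S) :
    (btrS B H S).card +
        (btrS (B ∪ {x}) (H \ (edgesMeeting H B ∩ edgesMeeting H {x})) (S \ {x})).card =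
      (btrS B H (S \ {x})).card + (btrS B (H \ edgesMeeting H {x}) (S \ {x})).card := by
  rw [← card_filter_add_card_filter_not (s := btrS B H S) (x ∈ ·), filter_notMem_btrS,
    card_filter_mem_btrS hx, btrS_union_singleton_eq_filter,
    ← card_filter_add_card_filter_not (s := btrS B (H \ edgesMeeting H {x}) (S \ {x}))
      fun T => HasPrivateEdge B H (insert x T) x]
  omega

/-- **Theorem 8.** With `H₁ := H \ H(x)` and `H₂ := H \ (H(B) ∩ H(x))`,
`#btr_B(H, S) + #btr_{B ∪ {x}}(H₂, S \ {x}) = #btr_B(H, S \ {x}) + #btr_B(H₁, S \ {x})`,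
i.e. `#btr_B(H, S) = #btr_B(H, S \ {x}) + #btr_B(H₁, S \ {x}) − #btr_{B ∪ {x}}(H₂, S \ {x})`. -/
theorem card_btrS_rec (H : Finset (Finset α)) (S B : Finset α)
    (hS : S ⊆ verts H) (hB : B ⊆ verts H) (x : α) (hx : x ∈ S) :
    (btrS B H S).card +
        (btrS (B ∪ {x}) (H \ (edgesMeeting H B ∩ edgesMeeting H {x})) (S \ {x})).card =
      (btrS B H (S \ {x})).card + (btrS B (H \ edgesMeeting H {x}) (S \ {x})).card :=
  card_btrS_rec_general H S B x hx
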